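/- Let s ≥ 1 be an integer and q an indeterminate. Define M_q(u) = Σ_{k=0}^{s} (-1)^k [s choose k]_q q^{k(1-s)} (q^{2k} - u)(q^{2(k+1)} - u) ··· (q^{2(k+s-2)} - u), a polynomial in u with coefficients in ℚ(q) (the product is empty, equal to 1, when s = 1). Then M_q(u) = 0 identically as a polynomial in u. -/

import Mathlib

/-- The balanced quantum integer `[m]_q = (q^m - q^{-m})/(q - q^{-1})` in `ℚ(q)`. -/
noncomputable def qInt (m : ℤ) : RatFunc ℚ :=
  (RatFunc.X ^ m - RatFunc.X ^ (-m)) / (RatFunc.X - RatFunc.X⁻¹)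

/-- The balanced quantum factorial `[n]_q!`. -/
noncomputable def qFact : ℕ → RatFunc ℚ
  | 0 => 1
  | n + 1 => qFact n * qInt (n + 1)

/-- The balanced quantum binomial coefficient `[s choose k]_q`. -/
noncomputable def qBinom (s k : ℕ) : RatFunc ℚ :=
  qFact s / (qFact k * qFact (s - k))



private lemma hq : (RatFunc.X : RatFunc ℚ) ≠ 0 := RatFunc.X_ne_zero

private lemma hpow_ne (n : ℕ) (hn : 1 ≤ n) : (RatFunc.X : RatFunc ℚ) ^ n - 1 ≠ 0 := by
  have h1 : (Polynomial.X ^ n - 1 : Polynomial ℚ) ≠ 0 := by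
    intro h
    rw [sub_eq_zero] at h
    have := congrArg (Polynomial.natDegree) h
    rw [Polynomial.natDegree_X_pow, Polynomial.natDegree_one] at this
    omega
  have := RatFunc.algebraMap_ne_zero h1
  rwa [map_sub, map_pow, RatFunc.algebraMap_X, map_one] at this

private lemma hden : (RatFunc.X : RatFunc ℚ) - RatFunc.X⁻¹ ≠ 0 := by
  have : (RatFunc.X : RatFunc ℚ) - RatFunc.X⁻¹ = RatFunc.X⁻¹ * (RatFunc.X ^ 2 - 1) := by
    rw [mul_sub, mul_one, sq, ← mul_assoc, inv_mul_cancel₀ hq, one_mul]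
  rw [this]
  exact mul_ne_zero (inv_ne_zero hq) (hpow_ne 2 (by norm_num))

private lemma qInt_ne_zero (n : ℕ) (hn : 1 ≤ n) : qInt n ≠ 0 := by
  rw [qInt]
  apply div_ne_zero _ hden
  have : (RatFunc.X : RatFunc ℚ) ^ (n : ℤ) - RatFunc.X ^ (-(n:ℤ)) =
      RatFunc.X ^ (-(n:ℤ)) * (RatFunc.X ^ (2*n) - 1) := by
    rw [mul_sub, mul_one, ← zpow_natCast (RatFunc.X : RatFunc ℚ) (2*n), ← zpow_add₀ hq]
    push_cast; ring_nf
  rw [this]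
  exact mul_ne_zero (zpow_ne_zero _ hq) (hpow_ne (2*n) (by omega))

private lemma qFact_ne_zero (n : ℕ) : qFact n ≠ 0 := by
  induction n with
  | zero => simp [qFact]
  | succ n ih =>
      rw [qFact]
      exact mul_ne_zero ih (by
        have := qInt_ne_zero (n+1) (by omega)
        push_cast at this ⊢
        exact this)

private lemma qInt_add (a b : ℤ) :
    qInt (a + b) = RatFunc.X ^ (-b) * qInt a + RatFunc.X ^ a * qInt b := by
  rw [qInt, qInt, qInt, ← mul_div_assoc, ← mul_div_assoc, ← add_div]
  congr 1
  rw [mul_sub, mul_sub, ← zpow_add₀ hq, ← zpow_add₀ hq, ← zpow_add₀ hq, ← zpow_add₀ hq]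
  ring_nf

private lemma qBinom_zero (s : ℕ) : qBinom s 0 = 1 := by
  rw [qBinom, qFact]
  simp [div_self (qFact_ne_zero s)]

private lemma qBinom_self (s : ℕ) : qBinom s s = 1 := by
  rw [qBinom, Nat.sub_self, qFact]
  simp [div_self (qFact_ne_zero s)]

private lemma qBinom_pascal (a b : ℕ) :
    qBinom (a+b+2) (a+1) =
      RatFunc.X ^ (-((a:ℤ)+1)) * qBinom (a+b+1) (a+1) +
      RatFunc.X ^ ((b:ℤ)+1) * qBinom (a+b+1) a := by
  have e1 : qBinom (a+b+2) (a+1) = qFact (a+b+2) / (qFact (a+1) * qFact (b+1)) := by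
    rw [qBinom, show (a+b+2)-(a+1) = b+1 from by omega]
  have e2 : qBinom (a+b+1) (a+1) = qFact (a+b+1) / (qFact (a+1) * qFact b) := by
    rw [qBinom, show (a+b+1)-(a+1) = b from by omega]
  have e3 : qBinom (a+b+1) a = qFact (a+b+1) / (qFact a * qFact (b+1)) := by
    rw [qBinom, show (a+b+1)-a = b+1 from by omega]
  rw [e1, e2, e3]
  have hf : qFact (a+b+2) = qFact (a+b+1) * qInt ((a:ℤ)+b+2) := by
    rw [show a+b+2 = (a+b+1)+1 from rfl, qFact]; push_cast; ring_nf
  have hadd : qInt ((a:ℤ)+b+2) =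
      RatFunc.X ^ (-((a:ℤ)+1)) * qInt ((b:ℤ)+1) + RatFunc.X ^ ((b:ℤ)+1) * qInt ((a:ℤ)+1) := by
    have := qInt_add ((b:ℤ)+1) ((a:ℤ)+1)
    rw [show ((b:ℤ)+1) + ((a:ℤ)+1) = (a:ℤ)+b+2 by ring] at this
    rw [this]
  have hfa : qFact (a+1) = qFact a * qInt ((a:ℤ)+1) := by
    rw [qFact]
  have hfb : qFact (b+1) = qFact b * qInt ((b:ℤ)+1) := by
    rw [qFact]
  have ha1 : qInt ((a:ℤ)+1) ≠ 0 := by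
    have := qInt_ne_zero (a+1) (by omega); push_cast at this; exact this
  have hb1 : qInt ((b:ℤ)+1) ≠ 0 := by
    have := qInt_ne_zero (b+1) (by omega); push_cast at this; exact this
  have haf : qFact a ≠ 0 := qFact_ne_zero a
  have hbf : qFact b ≠ 0 := qFact_ne_zero b
  rw [hf, hadd, hfa, hfb]
  field_simp

private lemma Xnat (n : ℕ) : (RatFunc.X : RatFunc ℚ) ^ (n : ℤ) = RatFunc.X ^ n := zpow_natCast _ n

private lemma coef_mid (w B1 B2 : RatFunc ℚ) (a b cc e1 e2 : ℤ) (h1 : a + cc = e1) (h2 : b + cc = e2) :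
    w * (RatFunc.X ^ a * B1 + RatFunc.X ^ b * B2) * RatFunc.X ^ cc
      = w * B1 * RatFunc.X ^ e1 + w * B2 * RatFunc.X ^ e2 := by
  rw [← h1, ← h2, zpow_add₀ hq, zpow_add₀ hq]; ring

private lemma coef_comb (w : RatFunc ℚ) (a e : ℤ) (m1 m2 p q : ℕ)
    (h1 : a + (m1:ℤ) = (p:ℤ) + e) (h2 : a + (m2:ℤ) = (p:ℤ) + ((q:ℤ) + e)) :
    w * RatFunc.X ^ a * ((RatFunc.X : RatFunc ℚ) ^ m1 - (RatFunc.X : RatFunc ℚ) ^ m2)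
      = (RatFunc.X : RatFunc ℚ) ^ p * (1 - (RatFunc.X : RatFunc ℚ) ^ q) * (w * RatFunc.X ^ e) := by
  rw [← Xnat m1, ← Xnat m2, ← Xnat p, ← Xnat q]
  have A1 : (RatFunc.X : RatFunc ℚ) ^ a * RatFunc.X ^ (m1:ℤ)
      = RatFunc.X ^ ((p:ℤ)) * RatFunc.X ^ e := by
    rw [← zpow_add₀ hq, ← zpow_add₀ hq, h1]
  have A2 : (RatFunc.X : RatFunc ℚ) ^ a * RatFunc.X ^ (m2:ℤ)
      = RatFunc.X ^ ((p:ℤ)) * (RatFunc.X ^ ((q:ℤ)) * RatFunc.X ^ e) := by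
    rw [← zpow_add₀ hq, ← zpow_add₀ hq, ← zpow_add₀ hq, h2]
  linear_combination w * A1 - w * A2

private lemma step (t r : ℕ) (Y : Polynomial (RatFunc ℚ))
    (IH : ∑ k ∈ Finset.range (t+2), Polynomial.C ((-1 : RatFunc ℚ)^(k) * qBinom (t+1) (k) * RatFunc.X ^ ((((k) : ℕ) : ℤ) * -(t:ℤ))) * ∏ j ∈ Finset.range t, (Polynomial.C ((RatFunc.X : RatFunc ℚ) ^ (2*((k)+j+(r+1)))) - Y) = 0) :
    ∑ k ∈ Finset.range (t+3), Polynomial.C ((-1 : RatFunc ℚ)^(k) * qBinom (t+2) (k) * RatFunc.X ^ ((((k) : ℕ) : ℤ) * -((t:ℤ)+1))) * ∏ j ∈ Finset.range (t+1), (Polynomial.C ((RatFunc.X : RatFunc ℚ) ^ (2*((k)+j+r))) - Y) = 0 := by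
  have h0 : Polynomial.C ((-1 : RatFunc ℚ)^(0) * qBinom (t+2) (0) * RatFunc.X ^ ((((0) : ℕ) : ℤ) * -((t:ℤ)+1))) * ∏ j ∈ Finset.range (t+1), (Polynomial.C ((RatFunc.X : RatFunc ℚ) ^ (2*((0)+j+r))) - Y) = Polynomial.C ((-1 : RatFunc ℚ)^(0) * qBinom (t+1) (0) * RatFunc.X ^ (-(((0) : ℕ) : ℤ) * ((t:ℤ)+2))) * ((Polynomial.C ((RatFunc.X : RatFunc ℚ) ^ (2*((0)+r))) - Y) * ∏ j ∈ Finset.range t, (Polynomial.C ((RatFunc.X : RatFunc ℚ) ^ (2*((0)+j+(r+1)))) - Y)) := by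
    have hc : (-1 : RatFunc ℚ)^(0:ℕ) * qBinom (t+2) (0:ℕ) * RatFunc.X ^ ((((0:ℕ)) : ℤ) * -((t:ℤ)+1))
        = (-1 : RatFunc ℚ)^(0:ℕ) * qBinom (t+1) (0:ℕ) * RatFunc.X ^ (-(((0:ℕ)) : ℤ) * ((t:ℤ)+2)) := by
      rw [qBinom_zero, qBinom_zero]; norm_num
    rw [hc]
    congr 1
    rw [Finset.prod_range_succ', mul_comm]
    congr 1
    exact Finset.prod_congr rfl (fun j _ => by rw [show 2*(0+(j+1)+r) = 2*(0+j+(r+1)) by omega])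
  have htop : Polynomial.C ((-1 : RatFunc ℚ)^(t+2) * qBinom (t+2) (t+2) * RatFunc.X ^ ((((t+2) : ℕ) : ℤ) * -((t:ℤ)+1))) * ∏ j ∈ Finset.range (t+1), (Polynomial.C ((RatFunc.X : RatFunc ℚ) ^ (2*((t+2)+j+r))) - Y) = -(Polynomial.C ((-1 : RatFunc ℚ)^(t+1) * qBinom (t+1) (t+1) * RatFunc.X ^ (-(((t+1) : ℕ) : ℤ) * ((t:ℤ)+2))) * ((∏ j ∈ Finset.range t, (Polynomial.C ((RatFunc.X : RatFunc ℚ) ^ (2*((t+1)+j+(r+1)))) - Y)) * (Polynomial.C ((RatFunc.X : RatFunc ℚ) ^ (2*((t+1)+t+(r+1)))) - Y))) := by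
    have hc : (-1 : RatFunc ℚ)^(t+2) * qBinom (t+2) (t+2) * RatFunc.X ^ ((((t+2) : ℕ) : ℤ) * -((t:ℤ)+1))
        = -((-1 : RatFunc ℚ)^(t+1) * qBinom (t+1) (t+1) * RatFunc.X ^ (-(((t+1) : ℕ) : ℤ) * ((t:ℤ)+2))) := by
      rw [qBinom_self, qBinom_self,
        show ((((t+2) : ℕ) : ℤ) * -((t:ℤ)+1)) = (-(((t+1) : ℕ) : ℤ) * ((t:ℤ)+2)) by push_cast; ring,
        pow_succ]
      ring
    rw [hc, map_neg, neg_mul, neg_inj, Finset.prod_range_succ]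
    congr 1
    congr 1
    · exact Finset.prod_congr rfl (fun j _ => by rw [show 2*((t+2)+j+r) = 2*((t+1)+j+(r+1)) by omega])
    · rw [show 2*((t+2)+t+r) = 2*((t+1)+t+(r+1)) by omega]
  have hmid : ∀ k, k ≤ t → (Polynomial.C ((-1 : RatFunc ℚ)^(k+1) * qBinom (t+2) (k+1) * RatFunc.X ^ ((((k+1) : ℕ) : ℤ) * -((t:ℤ)+1))) * ∏ j ∈ Finset.range (t+1), (Polynomial.C ((RatFunc.X : RatFunc ℚ) ^ (2*((k+1)+j+r))) - Y) = Polynomial.C ((-1 : RatFunc ℚ)^(k+1) * qBinom (t+1) (k+1) * RatFunc.X ^ (-(((k+1) : ℕ) : ℤ) * ((t:ℤ)+2))) * ((Polynomial.C ((RatFunc.X : RatFunc ℚ) ^ (2*((k+1)+r))) - Y) * ∏ j ∈ Finset.range t, (Polynomial.C ((RatFunc.X : RatFunc ℚ) ^ (2*((k+1)+j+(r+1)))) - Y)) + -(Polynomial.C ((-1 : RatFunc ℚ)^(k) * qBinom (t+1) (k) * RatFunc.X ^ (-(((k) : ℕ) : ℤ) * ((t:ℤ)+2))) * ((∏ j ∈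 Finset.range t, (Polynomial.C ((RatFunc.X : RatFunc ℚ) ^ (2*((k)+j+(r+1)))) - Y)) * (Polynomial.C ((RatFunc.X : RatFunc ℚ) ^ (2*((k)+t+(r+1)))) - Y)))) := by
    intro k hk
    obtain ⟨d, rfl⟩ : ∃ d, t = k + d := ⟨t - k, by omega⟩
    have hpas := qBinom_pascal k d
    have hP1 : ∏ j ∈ Finset.range (k+d+1), (Polynomial.C ((RatFunc.X : RatFunc ℚ) ^ (2*((k+1)+j+r))) - Y)
        = (Polynomial.C ((RatFunc.X : RatFunc ℚ) ^ (2*((k+1)+r))) - Y) *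
          ∏ j ∈ Finset.range (k+d), (Polynomial.C ((RatFunc.X : RatFunc ℚ) ^ (2*((k+1)+j+(r+1)))) - Y) := by
      rw [Finset.prod_range_succ', mul_comm]
      congr 1
      exact Finset.prod_congr rfl (fun j _ => by rw [show 2*((k+1)+(j+1)+r) = 2*((k+1)+j+(r+1)) by omega])
    have hP2 : ∏ j ∈ Finset.range (k+d+1), (Polynomial.C ((RatFunc.X : RatFunc ℚ) ^ (2*((k+1)+j+r))) - Y)
        = (∏ j ∈ Finset.range (k+d), (Polynomial.C ((RatFunc.X : RatFunc ℚ) ^ (2*(k+j+(r+1)))) - Y)) *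
          (Polynomial.C ((RatFunc.X : RatFunc ℚ) ^ (2*(k+(k+d)+(r+1)))) - Y) := by
      rw [Finset.prod_range_succ]
      congr 1
      · exact Finset.prod_congr rfl (fun j _ => by rw [show 2*((k+1)+j+r) = 2*(k+j+(r+1)) by omega])
      · rw [show 2*((k+1)+(k+d)+r) = 2*(k+(k+d)+(r+1)) by omega]
    rw [← hP1, ← hP2, hpas, ← sub_eq_add_neg, ← sub_mul, ← map_sub]
    congr 2
    rw [coef_mid ((-1 : RatFunc ℚ)^(k+1)) (qBinom (k+d+1) (k+1)) (qBinom (k+d+1) k)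
        (-((k:ℤ)+1)) ((d:ℤ)+1) ((((k+1) : ℕ) : ℤ) * -((((k+d) : ℕ) : ℤ)+1))
        (-(((k+1) : ℕ) : ℤ) * ((((k+d) : ℕ) : ℤ)+2)) (-(((k) : ℕ) : ℤ) * ((((k+d) : ℕ) : ℤ)+2))
        (by push_cast; ring) (by push_cast; ring)]
    ring
  have hcomb : ∀ k : ℕ, (Polynomial.C ((-1 : RatFunc ℚ)^(k) * qBinom (t+1) (k) * RatFunc.X ^ (-(((k) : ℕ) : ℤ) * ((t:ℤ)+2))) * ((Polynomial.C ((RatFunc.X : RatFunc ℚ) ^ (2*((k)+r))) - Y) * ∏ j ∈ Finset.range t, (Polynomial.C ((RatFunc.X : RatFunc ℚ) ^ (2*((k)+j+(r+1)))) - Y)) + -(Polynomial.C ((-1 : RatFunc ℚ)^(k) * qBinom (t+1) (k) * RatFunc.X ^ (-(((k) : ℕ) : ℤ) * ((t:ℤ)+2))) * ((∏ j ∈ Finset.range t, (Polynomial.C ((RatFunc.X : RatFunc ℚ) ^ (2*((k)+j+(r+1)))) - Y)) * (Polynomial.C ((RatFunc.X : RatFunc ℚ) ^ (2*((k)+t+(r+1))))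 - Y))) = Polynomial.C ((RatFunc.X : RatFunc ℚ) ^ (2*r) * (1 - (RatFunc.X : RatFunc ℚ) ^ (2*(t+1)))) * (Polynomial.C ((-1 : RatFunc ℚ)^(k) * qBinom (t+1) (k) * RatFunc.X ^ ((((k) : ℕ) : ℤ) * -(t:ℤ))) * ∏ j ∈ Finset.range t, (Polynomial.C ((RatFunc.X : RatFunc ℚ) ^ (2*((k)+j+(r+1)))) - Y))) := by
    intro k
    have key := coef_comb ((-1 : RatFunc ℚ)^k * qBinom (t+1) k) (-((k:ℕ):ℤ) * ((t:ℤ)+2)) (((k:ℕ):ℤ) * -(t:ℤ))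
        (2*(k+r)) (2*(k+t+(r+1))) (2*r) (2*(t+1)) (by push_cast; ring) (by push_cast; ring)
    calc Polynomial.C ((-1 : RatFunc ℚ)^(k) * qBinom (t+1) (k) * RatFunc.X ^ (-(((k) : ℕ) : ℤ) * ((t:ℤ)+2))) * ((Polynomial.C ((RatFunc.X : RatFunc ℚ) ^ (2*((k)+r))) - Y) * ∏ j ∈ Finset.range t, (Polynomial.C ((RatFunc.X : RatFunc ℚ) ^ (2*((k)+j+(r+1)))) - Y)) + -(Polynomial.C ((-1 : RatFunc ℚ)^(k) * qBinom (t+1) (k) * RatFunc.X ^ (-(((k) : ℕ) : ℤ) * ((t:ℤ)+2))) * ((∏ j ∈ Finset.range t, (Polynomial.C ((RatFunc.X : RatFunc ℚ) ^ (2*((k)+j+(r+1)))) - Y)) * (Polynomial.C ((RatFunc.X : RatFunc ℚ) ^ (2*((k)+t+(r+1)))) - Y)))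
        = Polynomial.C ((-1 : RatFunc ℚ)^k * qBinom (t+1) k * RatFunc.X ^ (-((k:ℕ):ℤ) * ((t:ℤ)+2)) *
            ((RatFunc.X : RatFunc ℚ) ^ (2*(k+r)) - (RatFunc.X : RatFunc ℚ) ^ (2*(k+t+(r+1))))) *
            ∏ j ∈ Finset.range t, (Polynomial.C ((RatFunc.X : RatFunc ℚ) ^ (2*(k+j+(r+1)))) - Y) := by
          simp only [map_mul, map_sub]; ring
      _ = Polynomial.C (((RatFunc.X : RatFunc ℚ) ^ (2*r) * (1 - (RatFunc.X : RatFunc ℚ) ^ (2*(t+1)))) * ((-1 : RatFunc ℚ)^k * qBinom (t+1) k * RatFunc.X ^ (((k:ℕ):ℤ) * -(t:ℤ)))) *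
            ∏ j ∈ Finset.range t, (Polynomial.C ((RatFunc.X : RatFunc ℚ) ^ (2*(k+j+(r+1)))) - Y) := by rw [key]
      _ = Polynomial.C ((RatFunc.X : RatFunc ℚ) ^ (2*r) * (1 - (RatFunc.X : RatFunc ℚ) ^ (2*(t+1)))) * (Polynomial.C ((-1 : RatFunc ℚ)^(k) * qBinom (t+1) (k) * RatFunc.X ^ ((((k) : ℕ) : ℤ) * -(t:ℤ))) * ∏ j ∈ Finset.range t, (Polynomial.C ((RatFunc.X : RatFunc ℚ) ^ (2*((k)+j+(r+1)))) - Y)) := by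
          simp only [map_mul]; ring
  calc ∑ k ∈ Finset.range (t+3), Polynomial.C ((-1 : RatFunc ℚ)^(k) * qBinom (t+2) (k) * RatFunc.X ^ ((((k) : ℕ) : ℤ) * -((t:ℤ)+1))) * ∏ j ∈ Finset.range (t+1), (Polynomial.C ((RatFunc.X : RatFunc ℚ) ^ (2*((k)+j+r))) - Y)
      = ((∑ k ∈ Finset.range (t+1), Polynomial.C ((-1 : RatFunc ℚ)^(k+1) * qBinom (t+2) (k+1) * RatFunc.X ^ ((((k+1) : ℕ) : ℤ) * -((t:ℤ)+1))) * ∏ j ∈ Finset.range (t+1), (Polynomial.C ((RatFunc.X : RatFunc ℚ) ^ (2*((k+1)+j+r))) - Y)) + (Polynomial.C ((-1 : RatFunc ℚ)^(0) * qBinom (t+2) (0) * RatFunc.X ^ ((((0) : ℕ) : ℤ) * -((t:ℤ)+1))) * ∏ j ∈ Finset.range (t+1), (Polynomial.C ((RatFunc.X : RatFunc ℚ) ^ (2*((0)+j+r))) - Y))) + (Polynomial.C ((-1 : RatFunc ℚ)^(t+2) * qBinom (t+2) (t+2) * RatFunc.X ^ ((((t+2) : ℕ) : ℤ) * -((t:ℤ)+1)))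 * ∏ j ∈ Finset.range (t+1), (Polynomial.C ((RatFunc.X : RatFunc ℚ) ^ (2*((t+2)+j+r))) - Y)) := by
        rw [Finset.sum_range_succ, Finset.sum_range_succ']
    _ = ((∑ k ∈ Finset.range (t+1), (Polynomial.C ((-1 : RatFunc ℚ)^(k+1) * qBinom (t+1) (k+1) * RatFunc.X ^ (-(((k+1) : ℕ) : ℤ) * ((t:ℤ)+2))) * ((Polynomial.C ((RatFunc.X : RatFunc ℚ) ^ (2*((k+1)+r))) - Y) * ∏ j ∈ Finset.range t, (Polynomial.C ((RatFunc.X : RatFunc ℚ) ^ (2*((k+1)+j+(r+1)))) - Y)) + -(Polynomial.C ((-1 : RatFunc ℚ)^(k) * qBinom (t+1) (k) * RatFunc.X ^ (-(((k) : ℕ) : ℤ) * ((t:ℤ)+2))) * ((∏ j ∈ Finset.range t, (Polynomial.C ((RatFunc.X : RatFunc ℚ) ^ (2*((k)+j+(r+1)))) - Y)) * (Polynomial.C ((RatFunc.X : RatFunc ℚ) ^ (2*((k)+t+(r+1)))) - Y))))) + (Polynomial.C ((-1 : RatFunc ℚ)^(0) * qBinom (t+1) (0) * RatFunc.X ^ (-(((0)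 : ℕ) : ℤ) * ((t:ℤ)+2))) * ((Polynomial.C ((RatFunc.X : RatFunc ℚ) ^ (2*((0)+r))) - Y) * ∏ j ∈ Finset.range t, (Polynomial.C ((RatFunc.X : RatFunc ℚ) ^ (2*((0)+j+(r+1)))) - Y)))) + (-(Polynomial.C ((-1 : RatFunc ℚ)^(t+1) * qBinom (t+1) (t+1) * RatFunc.X ^ (-(((t+1) : ℕ) : ℤ) * ((t:ℤ)+2))) * ((∏ j ∈ Finset.range t, (Polynomial.C ((RatFunc.X : RatFunc ℚ) ^ (2*((t+1)+j+(r+1)))) - Y)) * (Polynomial.C ((RatFunc.X : RatFunc ℚ) ^ (2*((t+1)+t+(r+1)))) - Y)))) := by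
        rw [h0, htop]
        congr 2
        exact Finset.sum_congr rfl (fun k hk => hmid k (by have := Finset.mem_range.mp hk; omega))
    _ = (((∑ k ∈ Finset.range (t+1), Polynomial.C ((-1 : RatFunc ℚ)^(k+1) * qBinom (t+1) (k+1) * RatFunc.X ^ (-(((k+1) : ℕ) : ℤ) * ((t:ℤ)+2))) * ((Polynomial.C ((RatFunc.X : RatFunc ℚ) ^ (2*((k+1)+r))) - Y) * ∏ j ∈ Finset.range t, (Polynomial.C ((RatFunc.X : RatFunc ℚ) ^ (2*((k+1)+j+(r+1)))) - Y))) + (Polynomial.C ((-1 : RatFunc ℚ)^(0) * qBinom (t+1) (0) * RatFunc.X ^ (-(((0) : ℕ) : ℤ) * ((t:ℤ)+2))) * ((Polynomial.C ((RatFunc.X : RatFunc ℚ) ^ (2*((0)+r))) - Y) * ∏ j ∈ Finset.range t, (Polynomial.C ((RatFunc.X : RatFunc ℚ) ^ (2*((0)+j+(r+1)))) - Y)))) + ((∑ k ∈ Finset.range (t+1), -(Polynomial.C ((-1 : RatFunc ℚ)^(k) * qBinom (t+1) (k) * RatFunc.X ^ (-(((k) : ℕ) : ℤ) * ((t:ℤ)+2)))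 * ((∏ j ∈ Finset.range t, (Polynomial.C ((RatFunc.X : RatFunc ℚ) ^ (2*((k)+j+(r+1)))) - Y)) * (Polynomial.C ((RatFunc.X : RatFunc ℚ) ^ (2*((k)+t+(r+1)))) - Y)))) + (-(Polynomial.C ((-1 : RatFunc ℚ)^(t+1) * qBinom (t+1) (t+1) * RatFunc.X ^ (-(((t+1) : ℕ) : ℤ) * ((t:ℤ)+2))) * ((∏ j ∈ Finset.range t, (Polynomial.C ((RatFunc.X : RatFunc ℚ) ^ (2*((t+1)+j+(r+1)))) - Y)) * (Polynomial.C ((RatFunc.X : RatFunc ℚ) ^ (2*((t+1)+t+(r+1)))) - Y)))))) := by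
        rw [Finset.sum_add_distrib]; ring
    _ = (∑ k ∈ Finset.range (t+2), Polynomial.C ((-1 : RatFunc ℚ)^(k) * qBinom (t+1) (k) * RatFunc.X ^ (-(((k) : ℕ) : ℤ) * ((t:ℤ)+2))) * ((Polynomial.C ((RatFunc.X : RatFunc ℚ) ^ (2*((k)+r))) - Y) * ∏ j ∈ Finset.range t, (Polynomial.C ((RatFunc.X : RatFunc ℚ) ^ (2*((k)+j+(r+1)))) - Y))) + (∑ k ∈ Finset.range (t+2), -(Polynomial.C ((-1 : RatFunc ℚ)^(k) * qBinom (t+1) (k) * RatFunc.X ^ (-(((k) : ℕ) : ℤ) * ((t:ℤ)+2))) * ((∏ j ∈ Finset.range t, (Polynomial.C ((RatFunc.X : RatFunc ℚ) ^ (2*((k)+j+(r+1)))) - Y)) * (Polynomial.C ((RatFunc.X : RatFunc ℚ) ^ (2*((k)+t+(r+1)))) - Y)))) := by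
        rw [Finset.sum_range_succ' (fun k => Polynomial.C ((-1 : RatFunc ℚ)^(k) * qBinom (t+1) (k) * RatFunc.X ^ (-(((k) : ℕ) : ℤ) * ((t:ℤ)+2))) * ((Polynomial.C ((RatFunc.X : RatFunc ℚ) ^ (2*((k)+r))) - Y) * ∏ j ∈ Finset.range t, (Polynomial.C ((RatFunc.X : RatFunc ℚ) ^ (2*((k)+j+(r+1)))) - Y))) (t+1), Finset.sum_range_succ (fun k => -(Polynomial.C ((-1 : RatFunc ℚ)^(k) * qBinom (t+1) (k) * RatFunc.X ^ (-(((k) : ℕ) : ℤ) * ((t:ℤ)+2))) * ((∏ j ∈ Finset.range t, (Polynomial.C ((RatFunc.X : RatFunc ℚ) ^ (2*((k)+j+(r+1)))) - Y)) * (Polynomial.C ((RatFunc.X : RatFunc ℚ) ^ (2*((k)+t+(r+1)))) - Y)))) (t+1)]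
    _ = ∑ k ∈ Finset.range (t+2), (Polynomial.C ((-1 : RatFunc ℚ)^(k) * qBinom (t+1) (k) * RatFunc.X ^ (-(((k) : ℕ) : ℤ) * ((t:ℤ)+2))) * ((Polynomial.C ((RatFunc.X : RatFunc ℚ) ^ (2*((k)+r))) - Y) * ∏ j ∈ Finset.range t, (Polynomial.C ((RatFunc.X : RatFunc ℚ) ^ (2*((k)+j+(r+1)))) - Y)) + -(Polynomial.C ((-1 : RatFunc ℚ)^(k) * qBinom (t+1) (k) * RatFunc.X ^ (-(((k) : ℕ) : ℤ) * ((t:ℤ)+2))) * ((∏ j ∈ Finset.range t, (Polynomial.C ((RatFunc.X : RatFunc ℚ) ^ (2*((k)+j+(r+1)))) - Y)) * (Polynomial.C ((RatFunc.X : RatFunc ℚ) ^ (2*((k)+t+(r+1)))) - Y)))) := by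
        rw [← Finset.sum_add_distrib]
    _ = ∑ k ∈ Finset.range (t+2), Polynomial.C ((RatFunc.X : RatFunc ℚ) ^ (2*r) * (1 - (RatFunc.X : RatFunc ℚ) ^ (2*(t+1)))) * (Polynomial.C ((-1 : RatFunc ℚ)^(k) * qBinom (t+1) (k) * RatFunc.X ^ ((((k) : ℕ) : ℤ) * -(t:ℤ))) * ∏ j ∈ Finset.range t, (Polynomial.C ((RatFunc.X : RatFunc ℚ) ^ (2*((k)+j+(r+1)))) - Y)) := Finset.sum_congr rfl (fun k _ => hcomb k)
    _ = Polynomial.C ((RatFunc.X : RatFunc ℚ) ^ (2*r) * (1 - (RatFunc.X : RatFunc ℚ) ^ (2*(t+1)))) * ∑ k ∈ Finset.range (t+2), (Polynomial.C ((-1 : RatFunc ℚ)^(k) * qBinom (t+1) (k) * RatFunc.X ^ ((((k) : ℕ) : ℤ) * -(t:ℤ))) * ∏ j ∈ Finset.range t, (Polynomial.C ((RatFunc.X : RatFunc ℚ) ^ (2*((k)+j+(r+1)))) - Y)) := by rw [Finset.mul_sum]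
    _ = 0 := by rw [IH, mul_zero]

private lemma key (t : ℕ) : ∀ (r : ℕ) (Y : Polynomial (RatFunc ℚ)),
    ∑ k ∈ Finset.range (t+2),
      Polynomial.C ((-1 : RatFunc ℚ)^k * qBinom (t+1) k * RatFunc.X ^ ((k:ℤ) * -(t:ℤ))) *
        ∏ j ∈ Finset.range t, (Polynomial.C ((RatFunc.X : RatFunc ℚ) ^ (2*(k+j+r))) - Y) = 0 := by
  induction t with
  | zero =>
      intro r Y
      rw [Finset.sum_range_succ, Finset.sum_range_succ, Finset.sum_range_zero]
      simp [qBinom_zero, qBinom_self]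
  | succ t IH =>
      intro r Y
      have hstep := step t r Y (IH (r+1) Y)
      calc ∑ k ∈ Finset.range (t+1+2),
            Polynomial.C ((-1 : RatFunc ℚ)^k * qBinom (t+1+1) k * RatFunc.X ^ ((k:ℤ) * -((t+1 : ℕ):ℤ))) *
              ∏ j ∈ Finset.range (t+1), (Polynomial.C ((RatFunc.X : RatFunc ℚ) ^ (2*(k+j+r))) - Y)
          = ∑ k ∈ Finset.range (t+3),
              Polynomial.C ((-1 : RatFunc ℚ)^(k) * qBinom (t+2) (k) * RatFunc.X ^ ((((k) : ℕ) : ℤ) * -((t:ℤ)+1))) *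
                ∏ j ∈ Finset.range (t+1), (Polynomial.C ((RatFunc.X : RatFunc ℚ) ^ (2*((k)+j+r))) - Y) := by
            apply Finset.sum_congr rfl
            intro k _
            rw [show ((k:ℤ) * -((t+1 : ℕ):ℤ)) = ((k:ℤ) * -((t:ℤ)+1)) from by push_cast; ring]
        _ = 0 := hstep

/-- For `s ≥ 1`, the polynomial
`M_q(u) = Σ_{k=0}^s (-1)^k [s choose k]_q q^{k(1-s)} (q^{2k}-u)(q^{2(k+1)}-u)···(q^{2(k+s-2)}-u)`
(in `u`, with coefficients in `ℚ(q)`) vanishes identically. -/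
theorem Mq_eq_zero (s : ℕ) (hs : 1 ≤ s) :
    ∑ k ∈ Finset.range (s + 1),
      Polynomial.C ((-1 : RatFunc ℚ) ^ k * qBinom s k * RatFunc.X ^ ((k : ℤ) * (1 - (s : ℤ)))) *
        ∏ j ∈ Finset.range (s - 1),
          (Polynomial.C (RatFunc.X ^ (2 * (k + j))) - Polynomial.X) = 0 := by
  obtain ⟨t, rfl⟩ : ∃ t, s = t + 1 := ⟨s - 1, by omega⟩
  have h := key t 0 Polynomial.X
  calc ∑ k ∈ Finset.range (t+1+1),
        Polynomial.C ((-1 : RatFunc ℚ) ^ k * qBinom (t+1) k * RatFunc.X ^ ((k : ℤ) * (1 - ((t+1 : ℕ) : ℤ)))) *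
          ∏ j ∈ Finset.range ((t+1) - 1), (Polynomial.C (RatFunc.X ^ (2 * (k + j))) - Polynomial.X)
      = ∑ k ∈ Finset.range (t+2),
          Polynomial.C ((-1 : RatFunc ℚ)^k * qBinom (t+1) k * RatFunc.X ^ ((k:ℤ) * -(t:ℤ))) *
            ∏ j ∈ Finset.range t, (Polynomial.C ((RatFunc.X : RatFunc ℚ) ^ (2*(k+j+0))) - Polynomial.X) := by
        apply Finset.sum_congr rfl
        intro k _
        rw [show ((k:ℤ) * (1 - ((t+1 : ℕ) : ℤ))) = ((k:ℤ) * -(t:ℤ)) from by push_cast; ring]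
        simp [Nat.add_sub_cancel]
    _ = 0 := h
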